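/- Higher-order Krawtchouk polynomials are orthogonal: for symmetric difference configurations h, h' of ℓ-tuples in F_2^n, ∑_g |g| · K_h(g) · K_{h'}(g) = 2^{ℓn} · |h| · 1[h = h'], where the sum is over all symmetric difference configurations g and |g| denotes the number of ℓ-tuples with configuration g. -/
import Mathlib


open Finset

/-- Symmetric difference configuration. -/
def sdConfig (n ℓ : ℕ) (z : Fin ℓ → (Fin n → ZMod 2)) : Finset (Fin ℓ) → ℕ :=
  fun J => hammingNorm (∑ j ∈ J, z j)

/-- `(-1)^{⟨x,y⟩}` for `x, y ∈ 𝔽₂ⁿ`. -/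
def chiPair {n : ℕ} (x y : Fin n → ZMod 2) : ℤ :=
  (-1) ^ (univ.filter (fun i : Fin n => x i = 1 ∧ y i = 1)).card

/-- `∏_{j=1}^ℓ (-1)^{⟨x_j, y_j⟩}`. -/
def tupleChi {n ℓ : ℕ} (x y : Fin ℓ → (Fin n → ZMod 2)) : ℤ :=
  ∏ j : Fin ℓ, chiPair (x j) (y j)

/-- The higher-order Krawtchouk polynomial `K_h(g)`: the sum of `∏_j (-1)^{⟨x_j,y_j⟩}` over
all tuples `y` with configuration `h`, where `x` is any tuple with configuration `g`. -/
noncomputable def kraw (n ℓ : ℕ) (h g : Finset (Fin ℓ) → ℕ) : ℤ :=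
  if hg : ∃ x : Fin ℓ → (Fin n → ZMod 2), sdConfig n ℓ x = g then
    ∑ y ∈ univ.filter (fun y : Fin ℓ → (Fin n → ZMod 2) => sdConfig n ℓ y = h),
      tupleChi hg.choose y
  else 0

def eps (a b : ZMod 2) : ℤ := if a = 1 ∧ b = 1 then -1 else 1

def pat {n ℓ : ℕ} (x : Fin ℓ → Fin n → ZMod 2) (i : Fin n) : Fin ℓ → ZMod 2 :=
  fun j => x j i

lemma chiPair_eq_prod {n : ℕ} (x y : Fin n → ZMod 2) :
    chiPair x y = ∏ i, eps (x i) (y i) := by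
  unfold chiPair eps
  rw [Finset.prod_ite, Finset.prod_const, Finset.prod_const, one_pow, mul_one]

lemma eps_mul_right (a b b' : ZMod 2) : eps a b * eps a b' = eps a (b + b') := by
  revert a b b'; decide

lemma eps_comm (a b : ZMod 2) : eps a b = eps b a := by revert a b; decide

lemma sum_eps_left (b : ZMod 2) : ∑ a : ZMod 2, eps a b = if b = 0 then 2 else 0 := by
  revert b; decide

lemma chiPair_comm {n : ℕ} (x y : Fin n → ZMod 2) : chiPair x y = chiPair y x := by
  simp only [chiPair_eq_prod]; exact Finset.prod_congr rfl fun i _ => eps_comm _ _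

lemma chiPair_mul_right {n : ℕ} (x y y' : Fin n → ZMod 2) :
    chiPair x y * chiPair x y' = chiPair x (y + y') := by
  simp only [chiPair_eq_prod, ← Finset.prod_mul_distrib]
  exact Finset.prod_congr rfl fun i _ => eps_mul_right _ _ _

lemma sum_chiPair_left {n : ℕ} (w : Fin n → ZMod 2) :
    ∑ v : Fin n → ZMod 2, chiPair v w = if w = 0 then 2 ^ n else 0 := by
  simp only [chiPair_eq_prod]
  rw [← Fintype.piFinset_univ, ← Finset.prod_univ_sum (fun _ : Fin n => (univ : Finset (ZMod 2))) (fun i a => eps a (w i))]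
  simp only [sum_eps_left]
  by_cases hw : w = 0
  · simp [hw, Finset.prod_const, Finset.card_univ]
  · obtain ⟨i, hi⟩ : ∃ i, w i ≠ 0 := by
      by_contra hc; push_neg at hc; exact hw (funext hc)
    rw [if_neg hw]
    exact Finset.prod_eq_zero (Finset.mem_univ i) (by simp [hi])

lemma tupleChi_mul_right {n ℓ : ℕ} (x y y' : Fin ℓ → (Fin n → ZMod 2)) :
    tupleChi x y * tupleChi x y' = tupleChi x (y + y') := by
  simp only [tupleChi, ← Finset.prod_mul_distrib]
  exact Finset.prod_congr rfl fun j _ => chiPair_mul_right _ _ _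

lemma sum_tupleChi_left {n ℓ : ℕ} (w : Fin ℓ → (Fin n → ZMod 2)) :
    ∑ x : Fin ℓ → (Fin n → ZMod 2), tupleChi x w = if w = 0 then 2 ^ (ℓ * n) else 0 := by
  simp only [tupleChi]
  rw [← Fintype.piFinset_univ, ← Finset.prod_univ_sum
      (fun _ : Fin ℓ => (univ : Finset (Fin n → ZMod 2))) (fun j v => chiPair v (w j))]
  simp only [sum_chiPair_left]
  by_cases hw : w = 0
  · simp [hw, Finset.prod_const, Finset.card_univ, ← pow_mul, mul_comm n ℓ]
  · obtain ⟨j, hj⟩ : ∃ j, w j ≠ 0 := by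
      by_contra hc; push_neg at hc; exact hw (funext hc)
    rw [if_neg hw]
    exact Finset.prod_eq_zero (Finset.mem_univ j) (by simp [hj])

lemma neg_one_pow_eq (c : ℕ) : ((-1 : ℤ)) ^ c = if (c : ZMod 2) = 1 then -1 else 1 := by
  have h2 : ((c : ZMod 2)) = ((c % 2 : ℕ) : ZMod 2) := (ZMod.natCast_mod c 2).symm
  rcases Nat.even_or_odd c with hc | hc
  · rw [hc.neg_one_pow, h2, Nat.even_iff.mp hc]
    norm_num
  · rw [hc.neg_one_pow, h2, Nat.odd_iff.mp hc]
    norm_num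

lemma chiPair_eq_inner {n : ℕ} (v u : Fin n → ZMod 2) :
    chiPair v u = if (∑ j ∈ univ.filter (fun j => u j = 1), v j) = 1 then -1 else 1 := by
  have h01 : ∀ a : ZMod 2, a ≠ 0 → a = 1 := by decide
  have hsum : (∑ j ∈ univ.filter (fun j => u j = 1), v j)
      = (((univ.filter (fun i : Fin n => v i = 1 ∧ u i = 1)).card : ℕ) : ZMod 2) := by
    rw [← Finset.sum_filter_of_ne (p := fun j => v j = 1) (fun j _ hj => h01 (v j) hj)]
    rw [Finset.filter_filter]
    have : (univ.filter fun j => u j = 1 ∧ v j = 1) = univ.filter fun i => v i = 1 ∧ u i = 1 := by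
      apply Finset.filter_congr; intro i _; exact and_comm
    rw [this]
    rw [Finset.sum_congr rfl (fun j hj => (Finset.mem_filter.mp hj).2.1)]
    simp [Finset.sum_const]
  rw [hsum, chiPair, neg_one_pow_eq]

lemma sum_chiPair_pat {n ℓ : ℕ} (x : Fin ℓ → Fin n → ZMod 2) (u : Fin ℓ → ZMod 2) :
    ∑ i : Fin n, chiPair (pat x i) u
      = (n : ℤ) - 2 * (sdConfig n ℓ x (univ.filter fun j => u j = 1) : ℤ) := by
  have key : ∀ i : Fin n, chiPair (pat x i) u
      = if (∑ j ∈ univ.filter (fun j => u j = 1), x j) i = 1 then -1 else 1 := by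
    intro i
    rw [chiPair_eq_inner]
    congr 1
    simp [pat, Finset.sum_apply]
  simp only [key]
  rw [Finset.sum_ite, Finset.sum_const, Finset.sum_const]
  have hcfg : sdConfig n ℓ x (univ.filter fun j => u j = 1)
      = (univ.filter fun i : Fin n =>
          (∑ j ∈ univ.filter (fun j => u j = 1), x j) i = 1).card := by
    unfold sdConfig hammingNorm
    congr 1
    apply Finset.filter_congr
    intro i _
    have h01 : ∀ a : ZMod 2, a ≠ 0 ↔ a = 1 := by decide
    exact h01 _
  rw [hcfg]
  have hcard := Finset.card_filter_add_card_filter_not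
    (s := (univ : Finset (Fin n)))
    (p := fun i => (∑ j ∈ univ.filter (fun j => u j = 1), x j) i = 1)
  rw [Finset.card_univ, Fintype.card_fin] at hcard
  -- (cast bookkeeping)
  set a := (univ.filter fun i : Fin n =>
      (∑ j ∈ univ.filter (fun j => u j = 1), x j) i = 1).card
  set b := (univ.filter fun i : Fin n =>
      ¬(∑ j ∈ univ.filter (fun j => u j = 1), x j) i = 1).card
  have : (a : ℤ) + b = n := by exact_mod_cast hcard
  simp only [nsmul_eq_mul]
  linarith

lemma sum_chiPair_right {n : ℕ} (w : Fin n → ZMod 2) :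
    ∑ v : Fin n → ZMod 2, chiPair w v = if w = 0 then 2 ^ n else 0 := by
  rw [← sum_chiPair_left w]
  exact Finset.sum_congr rfl fun v _ => chiPair_comm w v

lemma zmod2_add_eq_zero (a b : ZMod 2) : a + b = 0 ↔ b = a := by revert a b; decide

lemma patCount_eq {n ℓ : ℕ} {x x' : Fin ℓ → Fin n → ZMod 2}
    (hcfg : sdConfig n ℓ x = sdConfig n ℓ x') (v : Fin ℓ → ZMod 2) :
    (univ.filter fun i => pat x i = v).card = (univ.filter fun i => pat x' i = v).card := by
  have key : ∀ w : Fin ℓ → Fin n → ZMod 2,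
      ∑ u : Fin ℓ → ZMod 2, chiPair v u * ∑ i : Fin n, chiPair (pat w i) u
        = 2 ^ ℓ * ((univ.filter fun i => pat w i = v).card : ℤ) := by
    intro w
    have : ∀ u : Fin ℓ → ZMod 2, chiPair v u * ∑ i : Fin n, chiPair (pat w i) u
        = ∑ i : Fin n, chiPair (v + pat w i) u := by
      intro u
      rw [Finset.mul_sum]
      refine Finset.sum_congr rfl fun i _ => ?_
      rw [chiPair_comm v u, chiPair_comm (pat w i) u, chiPair_mul_right,
        chiPair_comm]
    simp only [this]
    rw [Finset.sum_comm]
    have : ∀ i : Fin n, (∑ u : Fin ℓ → ZMod 2, chiPair (v + pat w i) u)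
        = if pat w i = v then (2 : ℤ) ^ ℓ else 0 := by
      intro i
      rw [sum_chiPair_right]
      congr 1
      simp only [eq_iff_iff]
      constructor
      · intro h
        funext j
        have := congrFun h j
        simp only [Pi.add_apply, Pi.zero_apply] at this
        exact (zmod2_add_eq_zero _ _).mp this
      · intro h
        funext j
        simp [h, Pi.add_apply, (zmod2_add_eq_zero (v j) (v j)).mpr rfl]
    simp only [this]
    rw [Finset.sum_ite, Finset.sum_const, Finset.sum_const_zero, add_zero,
      nsmul_eq_mul, mul_comm]
  have h2 : ∑ u : Fin ℓ → ZMod 2, chiPair v u * ∑ i : Fin n, chiPair (pat x i) u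
      = ∑ u : Fin ℓ → ZMod 2, chiPair v u * ∑ i : Fin n, chiPair (pat x' i) u := by
    refine Finset.sum_congr rfl fun u _ => ?_
    rw [sum_chiPair_pat, sum_chiPair_pat, hcfg]
  rw [key, key] at h2
  have := mul_left_cancel₀ (a := (2:ℤ)^ℓ) (by positivity) h2
  exact_mod_cast this

lemma exists_perm {n ℓ : ℕ} {x x' : Fin ℓ → Fin n → ZMod 2}
    (hcfg : sdConfig n ℓ x = sdConfig n ℓ x') :
    ∃ σ : Equiv.Perm (Fin n), ∀ i, pat x' (σ i) = pat x i := by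
  have e : ∀ c : Fin ℓ → ZMod 2, { a // pat x a = c } ≃ { b // pat x' b = c } := by
    intro c
    apply Fintype.equivOfCardEq
    rw [Fintype.card_subtype, Fintype.card_subtype]
    exact patCount_eq hcfg c
  exact ⟨Equiv.ofFiberEquiv e, fun i => Equiv.ofFiberEquiv_map e i⟩

lemma krawSum_congr {n ℓ : ℕ} (h : Finset (Fin ℓ) → ℕ) {x x' : Fin ℓ → Fin n → ZMod 2}
    (hcfg : sdConfig n ℓ x = sdConfig n ℓ x') :
    ∑ y ∈ univ.filter (fun y : Fin ℓ → (Fin n → ZMod 2) => sdConfig n ℓ y = h), tupleChi x y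
      = ∑ y ∈ univ.filter (fun y : Fin ℓ → (Fin n → ZMod 2) => sdConfig n ℓ y = h),
          tupleChi x' y := by
  obtain ⟨σ, hσ⟩ := exists_perm hcfg
  have hσ' : ∀ j i, x' j (σ i) = x j i := fun j i => congrFun (hσ i) j
  -- the reindexing equiv on tuples
  let E : (Fin ℓ → Fin n → ZMod 2) ≃ (Fin ℓ → Fin n → ZMod 2) :=
    Equiv.arrowCongr (Equiv.refl (Fin ℓ)) (Equiv.arrowCongr σ (Equiv.refl (ZMod 2)))
  have hE : ∀ (y : Fin ℓ → Fin n → ZMod 2) (j : Fin ℓ) (i : Fin n),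
      E y j (σ i) = y j i := by
    intro y j i
    simp [E, Equiv.arrowCongr]
  have hEcfg : ∀ y, sdConfig n ℓ (E y) = sdConfig n ℓ y := by
    intro y
    funext J
    unfold sdConfig hammingNorm
    refine Finset.card_equiv σ.symm (fun i => ?_)
    simp only [Finset.mem_filter, Finset.mem_univ, true_and, Finset.sum_apply]
    constructor
    · intro hi hc
      apply hi
      have : ∀ j, E y j i = y j (σ.symm i) := by
        intro j; have := hE y j (σ.symm i); rwa [Equiv.apply_symm_apply] at this
      simp only [this]
      exact hc
    · intro hi hc
      apply hi
      have : ∀ j, E y j i = y j (σ.symm i) := by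
        intro j; have := hE y j (σ.symm i); rwa [Equiv.apply_symm_apply] at this
      simp only [this] at hc
      exact hc
  have hEchi : ∀ y, tupleChi x' (E y) = tupleChi x y := by
    intro y
    unfold tupleChi
    refine Finset.prod_congr rfl fun j _ => ?_
    rw [chiPair_eq_prod, chiPair_eq_prod]
    rw [← Equiv.prod_comp σ (fun i => eps (x' j i) (E y j i))]
    refine Finset.prod_congr rfl fun i _ => ?_
    rw [hE, hσ']
  calc ∑ y ∈ univ.filter (fun y => sdConfig n ℓ y = h), tupleChi x y
      = ∑ y : Fin ℓ → Fin n → ZMod 2, if sdConfig n ℓ y = h then tupleChi x y else 0 := by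
        rw [Finset.sum_filter]
    _ = ∑ y : Fin ℓ → Fin n → ZMod 2, if sdConfig n ℓ (E y) = h then tupleChi x' (E y) else 0 := by
        refine Finset.sum_congr rfl fun y _ => ?_
        rw [hEcfg, hEchi]
    _ = ∑ y : Fin ℓ → Fin n → ZMod 2, if sdConfig n ℓ y = h then tupleChi x' y else 0 := by
        exact Fintype.sum_equiv E _ _ (fun y => rfl)
    _ = ∑ y ∈ univ.filter (fun y => sdConfig n ℓ y = h), tupleChi x' y := by
        rw [Finset.sum_filter]

lemma kraw_apply {n ℓ : ℕ} (h : Finset (Fin ℓ) → ℕ) (x : Fin ℓ → Fin n → ZMod 2) :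
    kraw n ℓ h (sdConfig n ℓ x)
      = ∑ y ∈ univ.filter (fun y : Fin ℓ → (Fin n → ZMod 2) => sdConfig n ℓ y = h),
          tupleChi x y := by
  have hg : ∃ w : Fin ℓ → (Fin n → ZMod 2), sdConfig n ℓ w = sdConfig n ℓ x := ⟨x, rfl⟩
  rw [kraw, dif_pos hg]
  exact krawSum_congr h hg.choose_spec

/-- Orthogonality of the higher-order Krawtchouk polynomials:
`∑_g |g| K_h(g) K_{h'}(g) = 2^{ℓn} |h| 1[h = h']`, summing over all symmetric difference
configurations `g`, where `|g|` is the number of `ℓ`-tuples with configuration `g`. -/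
theorem kraw_orthogonality (n ℓ : ℕ) (z z' : Fin ℓ → (Fin n → ZMod 2)) :
    ∑ g ∈ Finset.image (sdConfig n ℓ) univ,
        ((univ.filter (fun y : Fin ℓ → (Fin n → ZMod 2) => sdConfig n ℓ y = g)).card : ℤ) *
          kraw n ℓ (sdConfig n ℓ z) g * kraw n ℓ (sdConfig n ℓ z') g =
      2 ^ (ℓ * n) *
        ((univ.filter
            (fun y : Fin ℓ → (Fin n → ZMod 2) => sdConfig n ℓ y = sdConfig n ℓ z)).card : ℤ) *
        (if sdConfig n ℓ z = sdConfig n ℓ z' then 1 else 0) := by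
  set h := sdConfig n ℓ z with hh
  set h' := sdConfig n ℓ z' with hh'
  -- Step 1: LHS = sum over all tuples x
  have step1 : ∑ g ∈ Finset.image (sdConfig n ℓ) univ,
        ((univ.filter (fun y : Fin ℓ → (Fin n → ZMod 2) => sdConfig n ℓ y = g)).card : ℤ) *
          kraw n ℓ h g * kraw n ℓ h' g
      = ∑ x : Fin ℓ → (Fin n → ZMod 2),
          kraw n ℓ h (sdConfig n ℓ x) * kraw n ℓ h' (sdConfig n ℓ x) := by
    rw [← Finset.sum_fiberwise_of_maps_to (g := sdConfig n ℓ) (s := univ)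
      (t := Finset.image (sdConfig n ℓ) univ)
      (fun x _ => Finset.mem_image_of_mem _ (Finset.mem_univ x))
      (fun x => kraw n ℓ h (sdConfig n ℓ x) * kraw n ℓ h' (sdConfig n ℓ x))]
    refine Finset.sum_congr rfl fun g hg => ?_
    rw [Finset.sum_congr rfl (fun x hx => by rw [(Finset.mem_filter.mp hx).2]),
      Finset.sum_const, nsmul_eq_mul]
    ring
  rw [step1]
  -- Step 2: expand kraw and use character orthogonality
  have step2 : ∀ x : Fin ℓ → (Fin n → ZMod 2),
      kraw n ℓ h (sdConfig n ℓ x) * kraw n ℓ h' (sdConfig n ℓ x)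
        = ∑ y ∈ univ.filter (fun y => sdConfig n ℓ y = h),
            ∑ y' ∈ univ.filter (fun y' => sdConfig n ℓ y' = h'),
              tupleChi x (y + y') := by
    intro x
    rw [kraw_apply, kraw_apply, Finset.sum_mul_sum]
    exact Finset.sum_congr rfl fun y _ =>
      Finset.sum_congr rfl fun y' _ => tupleChi_mul_right x y y'
  simp only [step2]
  rw [Finset.sum_comm]
  rw [Finset.sum_congr rfl fun y _ => Finset.sum_comm]
  have step3 : ∀ y ∈ univ.filter (fun y => sdConfig n ℓ y = h),
      (∑ y' ∈ univ.filter (fun y' => sdConfig n ℓ y' = h'),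
        ∑ x : Fin ℓ → (Fin n → ZMod 2), tupleChi x (y + y'))
      = if sdConfig n ℓ y = h' then (2 : ℤ) ^ (ℓ * n) else 0 := by
    intro y hy
    have : ∀ y' : Fin ℓ → (Fin n → ZMod 2),
        (∑ x : Fin ℓ → (Fin n → ZMod 2), tupleChi x (y + y'))
          = if y' = y then (2:ℤ) ^ (ℓ * n) else 0 := by
      intro y'
      rw [sum_tupleChi_left]
      congr 1
      simp only [eq_iff_iff]
      constructor
      · intro h0
        funext j i
        have := congrFun (congrFun h0 j) i
        simp only [Pi.add_apply, Pi.zero_apply] at this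
        exact (zmod2_add_eq_zero _ _).mp this
      · rintro rfl
        funext j i
        simp [(zmod2_add_eq_zero (y' j i) (y' j i)).mpr rfl]
    simp only [this]
    rw [Finset.sum_ite_eq' (univ.filter (fun y' => sdConfig n ℓ y' = h')) y
      (fun _ => (2:ℤ) ^ (ℓ * n))]
    simp
  rw [Finset.sum_congr rfl step3]
  by_cases hhh : h = h'
  · rw [if_pos hhh]
    rw [Finset.sum_congr rfl (fun y hy => by
      rw [if_pos (by rw [(Finset.mem_filter.mp hy).2]; exact hhh)])]
    rw [Finset.sum_const, nsmul_eq_mul]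
    ring
  · rw [if_neg hhh]
    rw [Finset.sum_congr rfl (fun y hy => by
      rw [if_neg (by rw [(Finset.mem_filter.mp hy).2]; exact hhh)])]
    simp
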